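/- The quantity sup_{x ∈ I} 𝔼_x(|X_{λ_1}| · 1{λ_1 < ∞}) is finite. -/

import Mathlib

/-!
Either `X_{λ₁} ∈ I`, so that `|X_{λ₁}| ≤ L`, or `λ₁ = n + 1` for some `n` with
`X₀, …, Xₙ ∈ I ∖ {0}`; hence
`|X_{λ₁}| ≤ L + ∑ₙ |X_{n+1}| 1{X₀, …, Xₙ ∈ I ∖ {0}}`.
From every site of the finite set `I ∖ {0}` the chain leaves it in one step with positive
probability, so it stays there for `n` steps with probability at most `ρⁿ` for some `ρ < 1`,
while the exponential tail of the jumps bounds the mean of `|X_{n+1}|` given `Xₙ ∈ I` by a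
constant `K`. Summing the geometric series bounds the expectation by `L + K / (1 - ρ)`.
-/

open MeasureTheory
open scoped Classical ENNReal

/-- A probability mass function on `ℤ`, encoded as a nonnegative real-valued
function summing to `1`. -/
def IsPMF (p : ℤ → ℝ) : Prop := (∀ x, 0 ≤ p x) ∧ HasSum p 1

/-- The hitting time of a set `A ⊆ ℤ` by a trajectory `ω : ℕ → ℤ`, with
value `⊤` if the set is never visited. -/
noncomputable def hitTime (A : Set ℤ) (ω : ℕ → ℤ) : ℕ∞ :=
  ⨅ (n : ℕ) (_ : ω n ∈ A), (n : ℕ∞)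

/-- `T' = inf{n ≥ 0 : {X_0, …, X_n} ∩ I ≠ ∅ and {X_0, …, X_n} ∩ Iᶜ ≠ ∅}`
where `I = [−L, L] ∩ ℤ`, with value `⊤` if no such `n` exists. -/
noncomputable def TprimeTime (L : ℤ) (ω : ℕ → ℤ) : ℕ∞ :=
  ⨅ (n : ℕ) (_ : (∃ i ≤ n, |ω i| ≤ L) ∧ ∃ i ≤ n, L < |ω i|), (n : ℕ∞)

/-- `λ_1 = T' ∧ H_0`. -/
noncomputable def lam1 (L : ℤ) (ω : ℕ → ℤ) : ℕ∞ :=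
  min (TprimeTime L ω) (hitTime {0} ω)

lemma mem_of_iInf_natCast_eq {Q : ℕ → Prop} {m : ℕ} (h : ⨅ (n : ℕ) (_ : Q n), (n : ℕ∞) = m) :
    Q m := by
  have hne : {n | Q n}.Nonempty := by
    by_contra hempty
    simp only [Set.not_nonempty_iff_eq_empty, Set.eq_empty_iff_forall_notMem,
      Set.mem_ofPred_eq] at hempty
    simp [hempty] at h
  have hsInf : sInf {n | Q n} = m := by exact_mod_cast (ENat.natCast_sInf hne).trans h
  exact hsInf ▸ Nat.sInf_mem hne

noncomputable section PathSums

variable {α : Type*}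

lemma ENNReal.tsum_fin_succ_eq_tsum_snoc {n : ℕ} (f : (Fin (n + 2) → α) → ℝ≥0∞) :
    ∑' a, f a = ∑' (a : Fin (n + 1) → α) (b : α), f (Fin.snoc a b) := by
  rw [← (Fin.snocEquiv fun _ => α).tsum_eq, ENNReal.tsum_prod', ENNReal.tsum_comm]
  rfl

def pathWeight (p : α → α → ℝ≥0∞) (n : ℕ) (a : Fin (n + 1) → α) : ℝ≥0∞ :=
  ∏ i : Fin n, p (a i.castSucc) (a i.succ)

lemma pathWeight_snoc (p : α → α → ℝ≥0∞) {n : ℕ} (a : Fin (n + 1) → α) (b : α) :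
    pathWeight p (n + 1) (Fin.snoc a b) = pathWeight p n a * p (a (Fin.last n)) b := by
  simp [pathWeight, Fin.prod_univ_castSucc, Fin.succ_castSucc, -Fin.castSucc_succ]

/-- `ℙ_x(X₀, …, Xₙ ∈ S)` for the chain with transition weights `p`. -/
def stayWeight [DecidableEq α] (p : α → α → ℝ≥0∞) (S : Set α) (x : α) (n : ℕ) : ℝ≥0∞ :=
  ∑' a : Fin (n + 1) → α, if a 0 = x ∧ ∀ i, a i ∈ S then pathWeight p n a else 0

def exitValue (S : Set α) (g : α → ℝ≥0∞) (m : ℕ) (a : Fin (m + 1) → α) : ℝ≥0∞ :=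
  if ∀ i : Fin m, a i.castSucc ∈ S then g (a (Fin.last m)) else 0

lemma tsum_exitValue_mul_pathWeight_le [DecidableEq α] (p : α → α → ℝ≥0∞) {S : Set α}
    {g : α → ℝ≥0∞} {r : ℝ≥0∞} (hg : ∀ z ∈ S, ∑' b, p z b * g b ≤ r) (x : α) (n : ℕ) :
    ∑' a, exitValue S g (n + 1) a * (if a 0 = x then pathWeight p (n + 1) a else 0)
      ≤ stayWeight p S x n * r := by
  rw [ENNReal.tsum_fin_succ_eq_tsum_snoc, stayWeight, ← ENNReal.tsum_mul_right]
  refine ENNReal.tsum_le_tsum fun a => ?_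
  have h0 (b : α) : (Fin.snoc a b : Fin (n + 2) → α) 0 = a 0 := Fin.snoc_castSucc (i := 0) ..
  simp only [exitValue, Fin.snoc_castSucc, Fin.snoc_last, pathWeight_snoc, h0]
  by_cases h : a 0 = x ∧ ∀ i, a i ∈ S
  swap
  · rcases not_and_or.mp h with h | h <;> simp [h]
  simp only [if_pos h, if_pos h.1, if_pos h.2]
  calc ∑' b, g b * (pathWeight p n a * p (a (Fin.last n)) b)
      = pathWeight p n a * ∑' b, p (a (Fin.last n)) b * g b := by
        rw [← ENNReal.tsum_mul_left]; exact tsum_congr fun b => by ring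
    _ ≤ pathWeight p n a * r := mul_le_mul_right (hg _ (h.2 _)) _

lemma stayWeight_le_pow [DecidableEq α] (p : α → α → ℝ≥0∞) {S : Set α} {ρ : ℝ≥0∞}
    (hρ : ∀ z ∈ S, ∑' b, S.indicator (p z) b ≤ ρ) (x : α) (n : ℕ) :
    stayWeight p S x n ≤ ρ ^ n := by
  induction n with
  | zero =>
    calc stayWeight p S x 0
        ≤ ∑' a : Fin 1 → α, if a 0 = x then 1 else 0 :=
          ENNReal.tsum_le_tsum fun a => by split_ifs <;> simp_all [pathWeight]
      _ = ρ ^ 0 := by rw [← (Equiv.funUnique (Fin 1) α).symm.tsum_eq]; simp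
  | succ n ih =>
    have hstep : stayWeight p S x (n + 1)
        = ∑' a, exitValue S (S.indicator 1) (n + 1) a *
            (if a 0 = x then pathWeight p (n + 1) a else 0) := by
      refine tsum_congr fun a => ?_
      simp only [exitValue, Fin.forall_fin_succ' (P := fun i => a i ∈ S)]
      by_cases hx : a 0 = x <;> by_cases hS : ∀ i : Fin (n + 1), a i.castSucc ∈ S <;>
        by_cases hl : a (Fin.last (n + 1)) ∈ S <;> simp [hx, hS, hl]
    calc stayWeight p S x (n + 1) ≤ stayWeight p S x n * ρ :=
          hstep ▸ tsum_exitValue_mul_pathWeight_le p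
            (fun z hz => by simpa [← Set.indicator_mul_right] using hρ z hz) x n
      _ ≤ ρ ^ (n + 1) := by rw [pow_succ]; exact mul_le_mul_left ih _

end PathSums

section CylinderMeasure

variable {α : Type*} [MeasurableSpace α]

lemma measurable_restrict_fin (m : ℕ) : Measurable fun (ω : ℕ → α) (i : Fin (m + 1)) => ω i :=
  measurable_pi_lambda _ fun i => measurable_pi_apply (i : ℕ)

lemma measurable_comp_restrict_fin [MeasurableSingletonClass α] [Countable α] {m : ℕ}
    (c : (Fin (m + 1) → α) → ℝ≥0∞) : Measurable fun ω : ℕ → α => c (fun i => ω i) :=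
  (measurable_of_countable c).comp (measurable_restrict_fin m)

lemma lintegral_comp_restrict_fin [MeasurableSingletonClass α] [Countable α]
    (μ : Measure (ℕ → α)) (m : ℕ) (c : (Fin (m + 1) → α) → ℝ≥0∞) :
    ∫⁻ ω, c (fun i => ω i) ∂μ = ∑' a, c a * μ {ω | (fun i : Fin (m + 1) => ω i) = a} := by
  rw [← lintegral_map (measurable_of_countable c) (measurable_restrict_fin m),
    lintegral_countable']
  refine tsum_congr fun a => ?_
  rw [Measure.map_apply (measurable_restrict_fin m) (measurableSet_singleton a)]
  rfl

lemma measure_restrict_fin_eq [DecidableEq α] {P : α → Measure (ℕ → α)} {p : α → α → ℝ≥0∞}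
    (hcyl : ∀ (x : α) (n : ℕ) (a : ℕ → α), P x {ω | ∀ i ≤ n, ω i = a i} =
      if a 0 = x then ∏ i ∈ Finset.range n, p (a i) (a (i + 1)) else 0)
    (x : α) (m : ℕ) (a : Fin (m + 1) → α) :
    P x {ω | (fun i : Fin (m + 1) => ω i) = a} =
      if a 0 = x then pathWeight p m a else 0 := by
  obtain ⟨a', ha'⟩ : ∃ a' : ℕ → α, ∀ i (hi : i < m + 1), a' i = a ⟨i, hi⟩ :=
    ⟨fun i => if hi : i < m + 1 then a ⟨i, hi⟩ else a 0, fun i hi => dif_pos hi⟩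
  have hset :
      {ω : ℕ → α | (fun i : Fin (m + 1) => ω i) = a} = {ω | ∀ i ≤ m, ω i = a' i} := by
    ext ω
    simp only [Set.mem_ofPred_eq, funext_iff]
    constructor
    · intro h i hi
      rw [ha' i (by omega)]
      exact h ⟨i, _⟩
    · intro h i
      rw [h i (by omega), ha' i i.isLt]
  have hprod : ∏ i ∈ Finset.range m, p (a' i) (a' (i + 1)) = pathWeight p m a := by
    rw [pathWeight, ← Fin.prod_univ_eq_prod_range]
    refine Finset.prod_congr rfl fun i _ => ?_
    rw [ha' i (by omega), ha' (i + 1) (by omega)]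
    rfl
  rw [hset, hcyl, hprod, ha' 0 m.succ_pos]
  rfl

lemma lintegral_tsum_exitValue_le [MeasurableSingletonClass α] [Countable α] [DecidableEq α]
    {P : α → Measure (ℕ → α)} {p : α → α → ℝ≥0∞}
    (hcyl : ∀ (x : α) (n : ℕ) (a : ℕ → α), P x {ω | ∀ i ≤ n, ω i = a i} =
      if a 0 = x then ∏ i ∈ Finset.range n, p (a i) (a (i + 1)) else 0)
    {S : Set α} {g : α → ℝ≥0∞} {ρ r : ℝ≥0∞}
    (hρ : ∀ z ∈ S, ∑' b, S.indicator (p z) b ≤ ρ) (hg : ∀ z ∈ S, ∑' b, p z b * g b ≤ r)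
    (x : α) :
    ∫⁻ ω, ∑' n, exitValue S g (n + 1) (fun i => ω i) ∂P x ≤ (1 - ρ)⁻¹ * r := by
  rw [lintegral_tsum fun n => (measurable_comp_restrict_fin _).aemeasurable]
  calc ∑' n, ∫⁻ ω, exitValue S g (n + 1) (fun i => ω i) ∂P x
      ≤ ∑' n, ρ ^ n * r := ENNReal.tsum_le_tsum fun n => by
        simp_rw [lintegral_comp_restrict_fin, measure_restrict_fin_eq hcyl]
        exact (tsum_exitValue_mul_pathWeight_le p hg x n).trans
          (mul_le_mul_left (stayWeight_le_pow p hρ x n) _)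
    _ = (1 - ρ)⁻¹ * r := by rw [ENNReal.tsum_mul_right, ENNReal.tsum_geometric]

end CylinderMeasure

lemma exists_lt_one_tsum_indicator_le {α : Type*} {p : α → α → ℝ≥0∞}
    (hp : ∀ z, ∑' w, p z w = 1) {S : Finset α} (hesc : ∀ z ∈ S, ∃ w ∉ S, p z w ≠ 0) :
    ∃ ρ < 1, ∀ z ∈ S, ∑' w, (S : Set α).indicator (p z) w ≤ ρ := by
  set stay : α → ℝ≥0∞ := fun z => ∑' w, (S : Set α).indicator (p z) w
  refine ⟨S.sup stay, (Finset.sup_lt_iff one_pos).mpr fun z hz => ?_,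
    fun z hz => S.le_sup (f := stay) hz⟩
  obtain ⟨w, hw, hpw⟩ := hesc z hz
  calc ∑' w, (S : Set α).indicator (p z) w < ∑' w, p z w :=
        ENNReal.tsum_lt_tsum (i := w) (ne_top_of_le_ne_top (by simp [hp z])
          (ENNReal.tsum_le_tsum (Set.indicator_le_self _ _)))
          (Set.indicator_le_self _ _) (by simpa [hw] using pos_iff_ne_zero.mpr hpw)
    _ = 1 := hp z

lemma summable_abs_add_mul_exp_neg_abs {f : ℝ} (hf : 0 < f) (c : ℝ) :
    Summable fun w : ℤ => (|(w : ℝ)| + c) * Real.exp (-f * |(w : ℝ)|) := by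
  have hnat : Summable fun n : ℕ => ((n : ℝ) + c) * Real.exp (-f * n) :=
    ((Real.summable_pow_mul_exp_neg_nat_mul 1 hf).add
      ((Real.summable_pow_mul_exp_neg_nat_mul 0 hf).mul_left c)).congr fun n => by ring
  exact .of_nat_of_neg (hnat.congr fun n => by simp) (hnat.congr fun n => by simp)

lemma tsum_ofReal_jump_mul_abs_le {πz : ℤ → ℤ → ℝ} (hnn : ∀ z w, 0 ≤ πz z w) {f F : ℝ}
    (hf : 0 < f) (hF : 0 ≤ F) (htail : ∀ z x, πz z x ≤ F * Real.exp (-f * |(x : ℝ)|))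
    {L z : ℤ} (hz : |z| ≤ L) :
    ∑' w, ENNReal.ofReal (πz z (w - z)) * ENNReal.ofReal |(w : ℝ)| ≤
      ENNReal.ofReal (∑' w : ℤ, (|(w : ℝ)| + L) * (F * Real.exp (-f * |(w : ℝ)|))) := by
  have hzL : |(z : ℝ)| ≤ L := by rw [← Int.cast_abs]; exact_mod_cast hz
  have hL : (0 : ℝ) ≤ L := (abs_nonneg _).trans hzL
  rw [ENNReal.ofReal_tsum_of_nonneg (fun w => by positivity)
      ((summable_abs_add_mul_exp_neg_abs hf L).mul_right F |>.congr fun w => by ring),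
    ← (Equiv.addRight z).tsum_eq]
  refine ENNReal.tsum_le_tsum fun w => ?_
  rw [Equiv.coe_addRight, add_sub_cancel_right, ← ENNReal.ofReal_mul (hnn _ _), mul_comm]
  refine ENNReal.ofReal_le_ofReal (mul_le_mul ?_ (htail z w) (hnn z w) (by positivity))
  calc |((w + z : ℤ) : ℝ)| ≤ |(w : ℝ)| + |(z : ℝ)| := by push_cast; exact abs_add_le _ _
    _ ≤ |(w : ℝ)| + L := by linarith

lemma IsPMF.tsum_ofReal_sub_eq_one {q : ℤ → ℝ} (hq : IsPMF q) (z : ℤ) :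
    ∑' w, ENNReal.ofReal (q (w - z)) = 1 := by
  refine ((Equiv.subRight z).tsum_eq fun w => ENNReal.ofReal (q w)).trans ?_
  rw [← ENNReal.ofReal_tsum_of_nonneg hq.1 hq.2.summable, hq.2.tsum_eq, ENNReal.ofReal_one]

noncomputable def puncturedIcc (L : ℤ) : Finset ℤ := (Finset.Icc (-L) L).erase 0

lemma mem_puncturedIcc {L z : ℤ} : z ∈ puncturedIcc L ↔ |z| ≤ L ∧ z ≠ 0 := by
  rw [puncturedIcc, Finset.mem_erase, Finset.mem_Icc, abs_le, and_comm]

lemma lam1_eq_succ_of_lt_abs {L : ℤ} (hL : 0 ≤ L) {ω : ℕ → ℤ} {m : ℕ} (hm : lam1 L ω = m)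
    (hout : L < |ω m|) : ∃ n, m = n + 1 ∧ ∀ i ≤ n, ω i ∈ puncturedIcc L := by
  have hT : TprimeTime L ω = m := by
    rcases min_eq_iff.mp hm with ⟨h, -⟩ | ⟨h, -⟩
    · exact h
    · have h0 : ω m = 0 := mem_of_iInf_natCast_eq h
      simp [h0] at hout
      omega
  obtain ⟨⟨j, hjm, hj⟩, -⟩ := mem_of_iInf_natCast_eq hT
  have hjm : j < m := lt_of_le_of_ne hjm (by rintro rfl; omega)
  refine ⟨m - 1, by omega, fun i hi => mem_puncturedIcc.mpr ⟨?_, fun h0 => ?_⟩⟩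
  · by_contra hiL
    have : TprimeTime L ω ≤ max i j :=
      iInf₂_le _ ⟨⟨j, le_max_right _ _, hj⟩, ⟨i, le_max_left _ _, lt_of_not_ge hiL⟩⟩
    rw [hT, Nat.cast_le] at this
    omega
  · have : lam1 L ω ≤ i := (min_le_right _ _).trans (iInf₂_le i h0)
    rw [hm, Nat.cast_le] at this
    omega

lemma abs_at_lam1_le {L : ℤ} (hL : 0 ≤ L) (ω : ℕ → ℤ) :
    (if lam1 L ω ≠ ⊤ then ENNReal.ofReal |((ω (lam1 L ω).toNat : ℤ) : ℝ)| else 0) ≤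
      ENNReal.ofReal L + ∑' n, exitValue (puncturedIcc L : Set ℤ)
        (fun b : ℤ => ENNReal.ofReal |(b : ℝ)|) (n + 1) (fun i => ω i) := by
  split_ifs with htop
  swap
  · exact zero_le
  obtain ⟨m, hm⟩ := ENat.ne_top_iff_exists.mp htop
  rw [← hm, ENat.toNat_natCast]
  rcases le_or_gt |ω m| L with hin | hout
  · refine le_add_right (ENNReal.ofReal_le_ofReal ?_)
    rw [← Int.cast_abs]
    exact_mod_cast hin
  · obtain ⟨n, rfl, hstay⟩ := lam1_eq_succ_of_lt_abs hL hm.symm hout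
    refine le_add_left (le_of_eq_of_le ?_ (ENNReal.le_tsum n))
    exact (if_pos fun i : Fin (n + 1) => hstay i (Nat.le_of_lt_succ i.isLt)).symm

theorem stmt13_general
    (π : ℤ → ℝ) (πz : ℤ → ℤ → ℝ)
    (hπz : ∀ z, IsPMF (πz z))
    (hsupp : (∀ x, 0 < π x) ∧ ∀ z, z ≠ 0 → ∀ x, 0 < πz z x)
    (htail : ∃ f F : ℝ, 0 < f ∧ 0 < F ∧
      (∀ x, π x ≤ F * Real.exp (-f * |(x : ℝ)|)) ∧
      (∀ z x, πz z x ≤ F * Real.exp (-f * |(x : ℝ)|)))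
    (L : ℤ) (hL : 0 < L)
    (P : ℤ → Measure (ℕ → ℤ))
    (hP : ∀ x, IsProbabilityMeasure (P x))
    (hcyl : ∀ (x : ℤ) (n : ℕ) (a : ℕ → ℤ),
      P x {ω | ∀ i ≤ n, ω i = a i} =
        if a 0 = x then
          ENNReal.ofReal (∏ i ∈ Finset.range n, πz (a i) (a (i + 1) - a i))
        else 0) :
    ∃ C : ℝ, ∀ x : ℤ, |x| ≤ L →
      ∫⁻ ω, (if lam1 L ω ≠ ⊤ then
          ENNReal.ofReal |((ω (lam1 L ω).toNat : ℤ) : ℝ)|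
        else 0) ∂(P x) ≤ ENNReal.ofReal C := by
  obtain ⟨f, F, hf, hF, -, hjump⟩ := htail
  have hnn (z : ℤ) : ∀ w, 0 ≤ πz z w := (hπz z).1
  set p : ℤ → ℤ → ℝ≥0∞ := fun z w => ENNReal.ofReal (πz z (w - z))
  -- from every site of `puncturedIcc L` the chain jumps to `2L + 1 ∉ I` with positive probability
  obtain ⟨ρ, hρ1, hρ⟩ := exists_lt_one_tsum_indicator_le (p := p)
    (fun z => (hπz z).tsum_ofReal_sub_eq_one z) (S := puncturedIcc L) fun z hz =>
      ⟨2 * L + 1, fun h => by rw [mem_puncturedIcc, abs_le] at h; omega,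
        (ENNReal.ofReal_pos.mpr (hsupp.2 z (mem_puncturedIcc.mp hz).2 _)).ne'⟩
  set K := ENNReal.ofReal (∑' w : ℤ, (|(w : ℝ)| + L) * (F * Real.exp (-f * |(w : ℝ)|)))
  have hK : ∀ z ∈ (puncturedIcc L : Set ℤ), ∑' w, p z w * ENNReal.ofReal |(w : ℝ)| ≤ K :=
    fun z hz => tsum_ofReal_jump_mul_abs_le hnn hf hF.le hjump (mem_puncturedIcc.mp hz).1
  have hρinv : (1 - ρ)⁻¹ ≠ ⊤ := ENNReal.inv_ne_top.mpr (tsub_pos_of_lt hρ1).ne'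
  refine ⟨(ENNReal.ofReal L + (1 - ρ)⁻¹ * K).toReal, fun x _ => ?_⟩
  rw [ENNReal.ofReal_toReal (by finiteness)]
  calc _ ≤ ∫⁻ ω, ENNReal.ofReal L + ∑' n, exitValue (puncturedIcc L : Set ℤ)
          (fun b : ℤ => ENNReal.ofReal |(b : ℝ)|) (n + 1) (fun i => ω i) ∂P x :=
        lintegral_mono (abs_at_lam1_le hL.le)
    _ ≤ ENNReal.ofReal L + (1 - ρ)⁻¹ * K := by
        rw [lintegral_add_left measurable_const, lintegral_const, measure_univ, mul_one]
        refine add_le_add le_rfl (lintegral_tsum_exitValue_le (fun x n a => ?_) hρ hK x)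
        rw [hcyl, ENNReal.ofReal_prod_of_nonneg fun i _ => hnn _ _]

/-- The quantity `sup_{x ∈ I} 𝔼_x(|X_{λ_1}| · 1{λ_1 < ∞})` is finite, where
`λ_1 = T' ∧ H_0` for the Markov chain on `ℤ` with transitions
`P(z, w) = π_z(w − z)`. -/
theorem stmt13
    (π : ℤ → ℝ) (πz : ℤ → ℤ → ℝ)
    (hπ : IsPMF π) (hπz : ∀ z, IsPMF (πz z))
    (hsymm : ∀ x, π (-x) = π x)
    (hsupp : (∀ x, 0 < π x) ∧ ∀ z, z ≠ 0 → ∀ x, 0 < πz z x)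
    (htail : ∃ f F : ℝ, 0 < f ∧ 0 < F ∧
      (∀ x, π x ≤ F * Real.exp (-f * |(x : ℝ)|)) ∧
      (∀ z x, πz z x ≤ F * Real.exp (-f * |(x : ℝ)|)))
    (htv : ∃ g G : ℝ, 0 < g ∧ 0 < G ∧
      ∀ z, (1 / 2) * ∑' x, |πz z x - π x| ≤ G * Real.exp (-g * |(z : ℝ)|))
    (L : ℤ) (hL : 0 < L)
    (P : ℤ → Measure (ℕ → ℤ))
    (hP : ∀ x, IsProbabilityMeasure (P x))
    (hcyl : ∀ (x : ℤ) (n : ℕ) (a : ℕ → ℤ),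
      P x {ω | ∀ i ≤ n, ω i = a i} =
        if a 0 = x then
          ENNReal.ofReal (∏ i ∈ Finset.range n, πz (a i) (a (i + 1) - a i))
        else 0) :
    ∃ C : ℝ, ∀ x : ℤ, |x| ≤ L →
      ∫⁻ ω, (if lam1 L ω ≠ ⊤ then
          ENNReal.ofReal |((ω (lam1 L ω).toNat : ℤ) : ℝ)|
        else 0) ∂(P x) ≤ ENNReal.ofReal C :=
  stmt13_general π πz hπz hsupp htail L hL P hP hcyl
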